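/- Let R be a ring and F : ModuleCat R ⥤ Ab an additive functor that is half-exact. Let B be an R-module with projective resolution ⋯ → P₁ → P₀ → B → 0, and for j ≥ 1 let ΩʲB denote the j-th syzygy (Ω⁰B = B, ΩʲB = ker(Pⱼ₋₁ ↠ Ωʲ⁻¹B)), so there are canonical epimorphisms Pⱼ ↠ ΩʲB and monomorphisms ΩʲB ↪ Pⱼ₋₁. Then the long sequence of abelian groups ⋯ → H₂(F(P_•)) → ker(F(Ω²B) → F(P₁)) → coker(F(P₂) → F(Ω²B)) → H₁(F(P_•)) → ker(F(ΩB) → F(P₀)) → coker(F(P₁) → F(ΩB)) → H₀(F(P_•)) → F(B) → coker(F(P₀) → F(B)) → 0, in which Hⱼ(F(P_•)) denotes the homology of the chain complex ⋯ → F(P₁) → F(P₀) at F(Pⱼ) and all maps are the canonically induced ones, is exact. -/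

import Mathlib

/-!
All groups of the sequence are kernels and cokernels built from `F(mⱼ)`, `F(pⱼ)` and
`F(dⱼ) = F(pⱼ₊₁) ≫ F(mⱼ)`. Exactness at `F(B)`, at `coker F(pⱼ₊₁)` and at `ker F(mⱼ)` is
formal: the last two are spots of the kernel–cokernel exact sequence of the composite
`F(pⱼ₊₁) ≫ F(mⱼ)`. Half-exactness enters only at `Hⱼ`, a quotient of a subgroup of `F(Pⱼ)`:
exactness of `F(Ωʲ⁺¹B) → F(Pⱼ) → F(ΩʲB)` passes to this subquotient along morphisms of short
complexes that are mono resp. epi in the middle.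
-/

open CategoryTheory Limits

set_option linter.unusedSectionVars false

namespace LeftFundamentalSeq

universe u v w

/-- The data of a projective resolution `⋯ → P₁ → P₀ → B → 0` of the module `B = S 0`
together with its syzygies `S j = Ωʲ B`, encoded by composable pairs
`Ωʲ⁺¹ B →(m j) Pⱼ →(p j) Ωʲ B` with `m j ≫ p j = 0` (each such pair is required to be a
short exact sequence in the main theorem). -/
structure SyzygyData (R : Type u) [Ring R] where
  /-- the syzygy modules, `S 0` being the given module `B` -/
  S : ℕ → ModuleCat.{v} R
  /-- the modules of the projective resolution -/
  P : ℕ → ModuleCat.{v} R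
  /-- the canonical monomorphisms `Ωʲ⁺¹ B ↪ Pⱼ` -/
  m : ∀ j, S (j + 1) ⟶ P j
  /-- the canonical epimorphisms `Pⱼ ↠ Ωʲ B` -/
  p : ∀ j, P j ⟶ S j
  wmp : ∀ j, m j ≫ p j = 0

variable {R : Type u} [Ring R]
variable (F : ModuleCat.{v} R ⥤ AddCommGrpCat.{w}) [F.Additive] (D : SyzygyData.{u, v} R)

namespace SyzygyData

/-- The differential `Pⱼ⁺¹ ⟶ Pⱼ` of the projective resolution. -/
def d (j : ℕ) : D.P (j + 1) ⟶ D.P j := D.p (j + 1) ≫ D.m j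

lemma d_comp_d (j : ℕ) : D.d (j + 1) ≫ D.d j = 0 := by
  show (D.p (j + 2) ≫ D.m (j + 1)) ≫ D.p (j + 1) ≫ D.m j = 0
  rw [Category.assoc, reassoc_of% (D.wmp (j + 1)), zero_comp, comp_zero]

end SyzygyData

/-- `K j = ker (F(Ωʲ⁺¹ B) → F(Pⱼ))`. -/
noncomputable def K (j : ℕ) : AddCommGrpCat.{w} := kernel (F.map (D.m j))

/-- `Cok j = coker (F(Pⱼ) → F(Ωʲ B))`. -/
noncomputable def Cok (j : ℕ) : AddCommGrpCat.{w} := cokernel (F.map (D.p j))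

/-- The cycles `Z j = ker (F(Pⱼ⁺¹) → F(Pⱼ))` of the chain complex `F(P_•)`. -/
noncomputable def Z (j : ℕ) : AddCommGrpCat.{w} := kernel (F.map (D.d j))

/-- The lift `ℓ j : F(Pⱼ⁺²) ⟶ Z j` of the differential `F(dⱼ₊₁)`. -/
noncomputable def l (j : ℕ) : F.obj (D.P (j + 2)) ⟶ Z F D j :=
  kernel.lift _ (F.map (D.d (j + 1))) (by
    rw [← F.map_comp, D.d_comp_d, F.map_zero])

/-- The homology `Hⱼ(F(P_•))` of the chain complex `⋯ → F(P₁) → F(P₀)` at `F(Pⱼ)`: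
`H 0 = coker(F(P₁) → F(P₀))` and `H (j+1) = Z j / im F(Pⱼ₊₂)`. -/
noncomputable def H : ℕ → AddCommGrpCat.{w}
  | 0 => cokernel (F.map (D.d 0))
  | (j + 1) => cokernel (l F D j)

/-- The canonical map `F(Ωʲ⁺² B) ⟶ Z j` induced by `F(m (j+1))`. -/
noncomputable def zmap (j : ℕ) : F.obj (D.S (j + 2)) ⟶ Z F D j :=
  kernel.lift _ (F.map (D.m (j + 1))) (by
    rw [← F.map_comp]
    show F.map (D.m (j + 1) ≫ D.p (j + 1) ≫ D.m j) = 0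
    rw [reassoc_of% (D.wmp (j + 1)), zero_comp, F.map_zero])

lemma comp_zmap (j : ℕ) : F.map (D.p (j + 2)) ≫ zmap F D j = l F D j := by
  apply (cancel_mono (kernel.ι (F.map (D.d j)))).1
  erw [Category.assoc, zmap, kernel.lift_ι, l, kernel.lift_ι, ← F.map_comp]
  rfl

/-- The canonical map `coker(F(Pⱼ₊₁) → F(Ωʲ⁺¹ B)) ⟶ Hⱼ(F(P_•))`. -/
noncomputable def toH : ∀ j, Cok F D (j + 1) ⟶ H F D j
  | 0 => cokernel.desc (F.map (D.p 1)) (F.map (D.m 0) ≫ cokernel.π (F.map (D.d 0))) (by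
      erw [← Category.assoc, ← F.map_comp]
      exact cokernel.condition _)
  | (j + 1) => cokernel.desc (F.map (D.p (j + 2))) (zmap F D j ≫ cokernel.π (l F D j)) (by
      erw [← Category.assoc, comp_zmap, cokernel.condition] <;> rfl)

/-- The canonical map `H₀(F(P_•)) ⟶ F(B)` induced by `F(p 0)`. -/
noncomputable def fromH0 : H F D 0 ⟶ F.obj (D.S 0) :=
  cokernel.desc (F.map (D.d 0)) (F.map (D.p 0)) (by
    erw [← F.map_comp]
    show F.map ((D.p 1 ≫ D.m 0) ≫ D.p 0) = 0
    erw [Category.assoc, D.wmp 0, comp_zero, F.map_zero])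

/-- The canonical projection `F(B) ⟶ coker(F(P₀) → F(B))`. -/
noncomputable def π0 : F.obj (D.S 0) ⟶ Cok F D 0 := cokernel.π (F.map (D.p 0))

/-- The canonical map `ker(F(Ωʲ⁺¹B) → F(Pⱼ)) ⟶ coker(F(Pⱼ₊₁) → F(Ωʲ⁺¹B))`. -/
noncomputable def fromK (j : ℕ) : K F D j ⟶ Cok F D (j + 1) :=
  kernel.ι (F.map (D.m j)) ≫ cokernel.π (F.map (D.p (j + 1)))

/-- The canonical map `Z j ⟶ K j` induced by `F(p (j+1))`. -/
noncomputable def toK (j : ℕ) : Z F D j ⟶ K F D j :=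
  kernel.lift _ (kernel.ι (F.map (D.d j)) ≫ F.map (D.p (j + 1))) (by
    erw [Category.assoc, ← F.map_comp]
    exact kernel.condition _)

/-- The connecting map `Hⱼ₊₁(F(P_•)) ⟶ ker(F(Ωʲ⁺¹B) → F(Pⱼ))`, induced by the universal
properties of kernels and cokernels. -/
noncomputable def conn (j : ℕ) : H F D (j + 1) ⟶ K F D j :=
  cokernel.desc (l F D j) (toK F D j) (by
    apply (cancel_mono (kernel.ι (F.map (D.m j)))).1
    erw [Category.assoc, zero_comp]
    show l F D j ≫ toK F D j ≫ kernel.ι _ = 0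
    erw [toK, kernel.lift_ι, ← Category.assoc, l, kernel.lift_ι, ← F.map_comp]
    show F.map ((D.p (j + 2) ≫ D.m (j + 1)) ≫ D.p (j + 1)) = 0
    erw [Category.assoc, D.wmp (j + 1), comp_zero, F.map_zero])

lemma w₁ : fromH0 F D ≫ π0 F D = 0 := by
  apply (cancel_epi (cokernel.π (F.map (D.d 0)))).1
  erw [comp_zero, ← Category.assoc, fromH0, cokernel.π_desc, π0, cokernel.condition] <;> rfl

lemma w₂ : toH F D 0 ≫ fromH0 F D = 0 := by
  apply (cancel_epi (cokernel.π (F.map (D.p 1)))).1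
  erw [comp_zero, ← Category.assoc, toH, cokernel.π_desc, Category.assoc, fromH0,
    cokernel.π_desc, ← F.map_comp, D.wmp 0, F.map_zero]

lemma w₃ : ∀ j, fromK F D j ≫ toH F D j = 0
  | 0 => by
      erw [fromK, Category.assoc, toH, cokernel.π_desc, ← Category.assoc,
        kernel.condition, zero_comp]
  | (j + 1) => by
      erw [fromK, Category.assoc, toH, cokernel.π_desc, ← Category.assoc]
      have h : kernel.ι (F.map (D.m (j + 1))) ≫ zmap F D j = 0 := by
        apply (cancel_mono (kernel.ι (F.map (D.d j)))).1
        erw [Category.assoc, zmap, kernel.lift_ι, kernel.condition, zero_comp]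
      erw [h, zero_comp]

lemma w₄ (j : ℕ) : conn F D j ≫ fromK F D j = 0 := by
  apply (cancel_epi (cokernel.π (l F D j))).1
  erw [comp_zero, ← Category.assoc, conn, cokernel.π_desc, fromK, ← Category.assoc,
    toK, kernel.lift_ι, Category.assoc, cokernel.condition, comp_zero]

lemma w₅ (j : ℕ) : toH F D (j + 1) ≫ conn F D j = 0 := by
  apply (cancel_epi (cokernel.π (F.map (D.p (j + 2))))).1
  erw [comp_zero, ← Category.assoc, toH, cokernel.π_desc, Category.assoc, conn,
    cokernel.π_desc]
  apply (cancel_mono (kernel.ι (F.map (D.m j)))).1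
  erw [Category.assoc, zero_comp]
  show zmap F D j ≫ toK F D j ≫ kernel.ι _ = 0
  erw [toK, kernel.lift_ι, ← Category.assoc, zmap, kernel.lift_ι, ← F.map_comp,
    D.wmp (j + 1), F.map_zero]

section Abelian

variable {C : Type*} [Category C] [Abelian C]

open ShortComplex

variable {S₁ S₂ : ShortComplex C}

theorem _root_.CategoryTheory.ShortComplex.Exact.of_epi_τ₂_of_mono_τ₃ (h₁ : S₁.Exact)
    (τ₁ : S₁.X₁ ⟶ S₂.X₁) (τ₂ : S₁.X₂ ⟶ S₂.X₂) (τ₃ : S₁.X₃ ⟶ S₂.X₃) [Epi τ₂] [Mono τ₃]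
    (comm₁₂ : τ₁ ≫ S₂.f = S₁.f ≫ τ₂) (comm₂₃ : τ₂ ≫ S₂.g = S₁.g ≫ τ₃) : S₂.Exact := by
  rw [exact_iff_exact_up_to_refinements]
  intro A y hy
  obtain ⟨A₁, π₁, _, x, hx⟩ := surjective_up_to_refinements_of_epi τ₂ y
  have hxg : x ≫ S₁.g = 0 := by
    rw [← cancel_mono τ₃, Category.assoc, ← comm₂₃, ← reassoc_of% hx, hy, comp_zero, zero_comp]
  obtain ⟨A₂, π₂, _, z, hz⟩ := h₁.exact_up_to_refinements x hxg
  refine ⟨A₂, π₂ ≫ π₁, inferInstance, z ≫ τ₁, ?_⟩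
  rw [Category.assoc, hx, reassoc_of% hz, Category.assoc, comm₁₂]

theorem _root_.CategoryTheory.ShortComplex.Exact.of_epi_τ₁_of_mono_τ₂ (h₂ : S₂.Exact)
    (τ₁ : S₁.X₁ ⟶ S₂.X₁) (τ₂ : S₁.X₂ ⟶ S₂.X₂) (τ₃ : S₁.X₃ ⟶ S₂.X₃) [Epi τ₁] [Mono τ₂]
    (comm₁₂ : τ₁ ≫ S₂.f = S₁.f ≫ τ₂) (comm₂₃ : τ₂ ≫ S₂.g = S₁.g ≫ τ₃) : S₁.Exact := by
  rw [exact_iff_exact_up_to_refinements]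
  intro A x hx
  have hxg : (x ≫ τ₂) ≫ S₂.g = 0 := by
    rw [Category.assoc, comm₂₃, reassoc_of% hx, zero_comp]
  obtain ⟨A₁, π₁, _, y, hy⟩ := h₂.exact_up_to_refinements _ hxg
  obtain ⟨A₂, π₂, _, z, hz⟩ := surjective_up_to_refinements_of_epi τ₁ y
  refine ⟨A₂, π₂ ≫ π₁, inferInstance, z, ?_⟩
  rw [← cancel_mono τ₂, Category.assoc, Category.assoc, hy, reassoc_of% hz, comm₁₂,
    Category.assoc]

section Exact

variable {X₁ X₂ X₃ : C} {a : X₁ ⟶ X₂} {b : X₂ ⟶ X₃} {w : a ≫ b = 0}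

theorem _root_.CategoryTheory.ShortComplex.Exact.cokernelDesc_left
    (hab : (ShortComplex.mk a b w).Exact) {W : C} {e : W ⟶ X₁} (he : e ≫ a = 0) :
    (ShortComplex.mk (cokernel.desc e a he) b
      (by rw [← cancel_epi (cokernel.π e), cokernel.π_desc_assoc, w, comp_zero])).Exact :=
  hab.of_epi_τ₂_of_mono_τ₃ (cokernel.π e) (𝟙 _) (𝟙 _) (by simp) (by simp)

theorem _root_.CategoryTheory.ShortComplex.Exact.comp_cokernelπ_cokernelDesc
    (hab : (ShortComplex.mk a b w).Exact) {W : C} {e : W ⟶ X₂} (he : e ≫ b = 0) :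
    (ShortComplex.mk (a ≫ cokernel.π e) (cokernel.desc e b he)
      (by rw [Category.assoc, cokernel.π_desc, w])).Exact :=
  hab.of_epi_τ₂_of_mono_τ₃ (𝟙 _) (cokernel.π e) (𝟙 _) (by simp) (by simp)

theorem _root_.CategoryTheory.ShortComplex.Exact.kernelLift_kernelLift
    (hab : (ShortComplex.mk a b w).Exact) {Z : C} {g : X₂ ⟶ Z} {c : X₃ ⟶ Z}
    (hbc : b ≫ c = g) :
    (ShortComplex.mk (kernel.lift g a (by rw [← hbc, reassoc_of% w, zero_comp]))
      (kernel.lift c (kernel.ι g ≫ b) (by rw [Category.assoc, hbc, kernel.condition]))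
      (by ext; simp [w])).Exact :=
  hab.of_epi_τ₁_of_mono_τ₂ (𝟙 _) (kernel.ι g) (kernel.ι c) (by simp) (by simp)

theorem _root_.CategoryTheory.ShortComplex.exact_kernelι_kernelLift {Y Z : C} {u : X₁ ⟶ Y}
    {g : Y ⟶ Z} (hu : u ≫ g = 0) :
    (ShortComplex.mk (kernel.ι u) (kernel.lift g u hu) (by ext; simp)).Exact :=
  -- restated through `mk`: instance search does not unfold `kernelSequence u` to see `Epi (𝟙 _)`
  have hu' : (ShortComplex.mk (kernel.ι u) u (kernel.condition u)).Exact := kernelSequence_exact u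
  hu'.of_epi_τ₁_of_mono_τ₂ (𝟙 _) (𝟙 _) (kernel.ι g) (by simp) (by simp)

end Exact

variable {X Y W : C} {f : X ⟶ Y} {g : Y ⟶ W} {h : X ⟶ W}

theorem _root_.CategoryTheory.kernelCokernelComp_exact_at_kernel (hfg : f ≫ g = h) :
    (ShortComplex.mk
      (kernel.lift g (kernel.ι h ≫ f) (by rw [Category.assoc, hfg, kernel.condition]))
      (kernel.ι g ≫ cokernel.π f)
      (by rw [kernel.lift_ι_assoc, Category.assoc, cokernel.condition, comp_zero])).Exact := by
  rw [exact_iff_exact_up_to_refinements]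
  intro A k hk
  obtain ⟨A₁, π₁, _, x, hx⟩ := (CokernelCofork.IsColimit.comp_π_eq_zero_iff_up_to_refinements
    (cokernelIsCokernel f) (k ≫ kernel.ι g)).1 (by simpa using hk)
  have hxh : x ≫ h = 0 := by
    rw [← hfg, ← reassoc_of% hx]
    simp
  refine ⟨A₁, π₁, inferInstance, kernel.lift h x hxh, ?_⟩
  rw [← cancel_mono (kernel.ι g)]
  simpa using hx

theorem _root_.CategoryTheory.kernelCokernelComp_exact_at_cokernel (hfg : f ≫ g = h)
    {K : C} {k : K ⟶ Y} {hk : k ≫ g = 0} (hkg : (ShortComplex.mk k g hk).Exact) :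
    (ShortComplex.mk (k ≫ cokernel.π f)
      (cokernel.desc f (g ≫ cokernel.π h) (by rw [reassoc_of% hfg, cokernel.condition]))
      (by rw [Category.assoc, cokernel.π_desc, reassoc_of% hk, zero_comp])).Exact := by
  rw [exact_iff_exact_up_to_refinements]
  intro A y hy
  obtain ⟨A₁, π₁, _, y', hy'⟩ := surjective_up_to_refinements_of_epi (cokernel.π f) y
  have hy'g : (y' ≫ g) ≫ cokernel.π h = 0 := by
    have := π₁ ≫= hy
    dsimp at this
    simpa only [reassoc_of% hy', cokernel.π_desc, comp_zero, Category.assoc] using this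
  obtain ⟨A₂, π₂, _, x, hx⟩ :=
    (CokernelCofork.IsColimit.comp_π_eq_zero_iff_up_to_refinements
      (cokernelIsCokernel h) _).1 hy'g
  have hdiff : (π₂ ≫ y' - x ≫ f) ≫ g = 0 := by
    simp only [Preadditive.sub_comp, Category.assoc, hfg, ← hx, sub_self]
  obtain ⟨A₃, π₃, _, z, hz⟩ := hkg.exact_up_to_refinements _ hdiff
  refine ⟨A₃, π₃ ≫ π₂ ≫ π₁, inferInstance, z, ?_⟩
  simp [hy', ← reassoc_of% hz]

end Abelian

/-- **The left fundamental sequence of a half-exact covariant functor is exact.**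
Let `F` be an additive half-exact functor from `R`-modules to abelian groups and
`⋯ → P₁ → P₀ → B → 0` a projective resolution of `B = S 0` with syzygies `Ωʲ B = S j`
(encoded by the short exact sequences `0 → S (j+1) → P j → S j → 0`).  Then the long sequence
`⋯ → H₂(F(P_•)) → ker(F(Ω²B) → F(P₁)) → coker(F(P₂) → F(Ω²B)) → H₁(F(P_•)) →`
`ker(F(ΩB) → F(P₀)) → coker(F(P₁) → F(ΩB)) → H₀(F(P_•)) → F(B) → coker(F(P₀) → F(B)) → 0`,
with all maps the canonically induced ones, is exact. -/
theorem left_fundamental_sequence_exact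
    (hhalf : ∀ ⦃X Y Z : ModuleCat.{v} R⦄ (f : X ⟶ Y) (g : Y ⟶ Z) (w : f ≫ g = 0),
      (ShortComplex.mk f g w).ShortExact →
      (ShortComplex.mk (F.map f) (F.map g)
        (by rw [← F.map_comp, w, F.map_zero])).Exact)
    (hres : ∀ j, (ShortComplex.mk (D.m j) (D.p j) (D.wmp j)).ShortExact) :
    Epi (π0 F D) ∧
    (ShortComplex.mk _ _ (w₁ F D)).Exact ∧
    (ShortComplex.mk _ _ (w₂ F D)).Exact ∧
    (∀ j, (ShortComplex.mk _ _ (w₃ F D j)).Exact) ∧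
    (∀ j, (ShortComplex.mk _ _ (w₄ F D j)).Exact) ∧
    (∀ j, (ShortComplex.mk _ _ (w₅ F D j)).Exact) := by
  have hFres (j : ℕ) := hhalf _ _ _ (hres j)
  refine ⟨inferInstanceAs (Epi (cokernel.π _)), ?_, ?_, fun j => ?_, fun j => ?_, fun j => ?_⟩
  · exact (ShortComplex.cokernelSequence_exact _).cokernelDesc_left _
  · exact ((hFres 0).comp_cokernelπ_cokernelDesc _).cokernelDesc_left _
  · cases j with
    | zero =>
      exact kernelCokernelComp_exact_at_cokernel (F.map_comp _ _).symm
        (ShortComplex.kernelSequence_exact _)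
    | succ j =>
      exact kernelCokernelComp_exact_at_cokernel (comp_zmap F D j)
        (ShortComplex.exact_kernelι_kernelLift _)
  · exact (kernelCokernelComp_exact_at_kernel (F.map_comp _ _).symm).cokernelDesc_left _
  · have hZ := (hFres (j + 1)).kernelLift_kernelLift (F.map_comp (D.p (j + 1)) (D.m j)).symm
    exact (hZ.comp_cokernelπ_cokernelDesc _).cokernelDesc_left _

end LeftFundamentalSeq
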